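/- arXiv:1908.04850 — 4 statements merged into one kernel-verified Lean document; each statement's English description precedes it below -/
import Mathlib

section
/- The rational function h(u) = 2(1 + 19u + 51u² + 225u³) / ((1+u)(1+3u)³(1+9u)) is strictly decreasing on (0, ∞) and satisfies h(1/3) = 1. Consequently, for every u > 1/3 one has h(u) < 1. -/
/-!
By the quotient rule, `h' = -12 u P(u) / D(u)²`, where `D` is the denominator of `h` and `P` is a
polynomial with positive coefficients; so `h' < 0` on `(0, ∞)` and `h` is strictly decreasing
there. Since `h (1/3) = 1`, it follows that `h u < 1` for `u > 1/3`.
-/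

open Set

namespace NuM

def num (u : ℝ) : ℝ := 2 * (1 + 19 * u + 51 * u ^ 2 + 225 * u ^ 3)

def den (u : ℝ) : ℝ := (1 + u) * (1 + 3 * u) ^ 3 * (1 + 9 * u)

def derivFactor (u : ℝ) : ℝ :=
  25 + 314 * u + 1311 * u ^ 2 + 3564 * u ^ 3 + 11799 * u ^ 4 + 25434 * u ^ 5 + 18225 * u ^ 6

lemma den_pos {u : ℝ} (hu : 0 ≤ u) : 0 < den u := by
  unfold den; positivity

lemma derivFactor_pos {u : ℝ} (hu : 0 ≤ u) : 0 < derivFactor u := by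
  unfold derivFactor; positivity

lemma hasDerivAt_num (u : ℝ) : HasDerivAt num (2 * (19 + 102 * u + 675 * u ^ 2)) u :=
  ((((((hasDerivAt_id' u).const_mul 19).const_add 1).add
    ((hasDerivAt_pow 2 u).const_mul 51)).add
      ((hasDerivAt_pow 3 u).const_mul 225)).const_mul 2).congr_deriv (by ring)

lemma hasDerivAt_den (u : ℝ) :
    HasDerivAt den (19 + 252 * u + 1134 * u ^ 2 + 2052 * u ^ 3 + 1215 * u ^ 4) u := by
  have h1 := (hasDerivAt_id' u).const_add 1
  have h3 := (((hasDerivAt_id' u).const_mul 3).const_add 1).fun_pow 3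
  have h9 := ((hasDerivAt_id' u).const_mul 9).const_add 1
  exact ((h1.fun_mul h3).fun_mul h9).congr_deriv (by ring)

lemma hasDerivAt_num_div_den {u : ℝ} (hu : den u ≠ 0) :
    HasDerivAt (fun x ↦ num x / den x) (-(12 * u * derivFactor u) / den u ^ 2) u := by
  refine ((hasDerivAt_num u).div (hasDerivAt_den u) hu).congr_deriv ?_
  unfold num den derivFactor
  field_simp
  ring

lemma strictAntiOn_num_div_den : StrictAntiOn (fun x ↦ num x / den x) (Ioi 0) := by
  have hderiv (u : ℝ) (hu : 0 < u) :=
    hasDerivAt_num_div_den (den_pos hu.le).ne'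
  refine strictAntiOn_of_deriv_neg (convex_Ioi 0)
    (fun u hu ↦ (hderiv u hu).continuousAt.continuousWithinAt) fun u hu ↦ ?_
  rw [interior_Ioi] at hu
  rw [(hderiv u hu).deriv]
  have hnum : 0 < 12 * u * derivFactor u :=
    mul_pos (mul_pos (by norm_num) hu) (derivFactor_pos hu.le)
  exact div_neg_of_neg_of_pos (neg_neg_of_pos hnum) (pow_pos (den_pos hu.le) 2)

end NuM

/-- The map `h(u) = 2(1 + 19u + 51u² + 225u³)/((1+u)(1+3u)³(1+9u))` is strictly
decreasing on `(0, ∞)`, satisfies `h(1/3) = 1`, and hence `h(u) < 1` for `u > 1/3`. -/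
theorem rational_function_decreasing_nuM
    (h : ℝ → ℝ)
    (hh : ∀ u, h u = 2 * (1 + 19 * u + 51 * u ^ 2 + 225 * u ^ 3) /
      ((1 + u) * (1 + 3 * u) ^ 3 * (1 + 9 * u))) :
    StrictAntiOn h (Set.Ioi (0 : ℝ)) ∧
    h (1 / 3) = 1 ∧
    (∀ u : ℝ, 1 / 3 < u → h u < 1) := by
  have hanti : StrictAntiOn h (Ioi 0) := by
    rw [show h = fun x ↦ NuM.num x / NuM.den x from funext hh]
    exact NuM.strictAntiOn_num_div_den
  have hthird : h (1 / 3) = 1 := by rw [hh]; norm_num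
  refine ⟨hanti, hthird, fun u hu ↦ ?_⟩
  rw [← hthird]
  exact hanti (by norm_num) (mem_Ioi.2 (lt_trans (by norm_num) hu)) hu
end

section
/- Let K(z) be a formal power series with K(0) = 0, over a commutative ring in a second variable x. Define N = K/(1 − xK) and S = K·(xK)/(1 − xK) (i.e., N = K·SEQ(xK) and S = K·SEQ_{≥1}(xK) as formal power series, where SEQ(w) = 1/(1−w)). Then S = xN²/(1 + xN) and N = S + K. -/
open PowerSeries

/-! With `u = 1 - xK` cancellable, `S·u = xK·K = xK·(N·u)` gives `S = xKN`, while `N·u = K` reads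
`N = K + xKN`. Hence `N = K + S`, and `S(1 + xN) = xKN(1 + xN) = xN(K + xKN) = xN²`. -/

theorem PowerSeries.isUnit_one_sub {R : Type*} [CommRing R] {f : R⟦X⟧}
    (hf : constantCoeff f = 0) : IsUnit (1 - f) := by
  simp [isUnit_iff_constantCoeff, hf]

theorem mul_one_add_mul_eq_and_eq_add_of_mul_one_sub_eq {R : Type*} [CommRing R] {c K N S : R}
    (hu : IsRightRegular (1 - c * K)) (hN : N * (1 - c * K) = K)
    (hS : S * (1 - c * K) = c * K ^ 2) :
    S * (1 + c * N) = c * N ^ 2 ∧ N = S + K := by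
  have hSN : S = c * K * N := hu (by linear_combination hS - c * K * hN)
  exact ⟨by linear_combination (1 + c * N) * hSN - c * N * hN, by linear_combination hN - hSN⟩

/-- For formal power series with `K(0) = 0`, if `N = K·SEQ(xK)` and
`S = K·SEQ_{≥1}(xK)` (expressed via `N(1−xK) = K` and `S(1−xK) = xK²`),
then `S = xN²/(1+xN)` (i.e. `S(1+xN) = xN²`) and `N = S + K`. -/
theorem series_network_identity
    (A : Type*) [CommRing A] (x : A) (K N S : PowerSeries A)
    (hK0 : PowerSeries.constantCoeff K = 0)
    (hN : N * (1 - PowerSeries.C x * K) = K)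
    (hS : S * (1 - PowerSeries.C x * K) = PowerSeries.C x * K ^ 2) :
    S * (1 + PowerSeries.C x * N) = PowerSeries.C x * N ^ 2 ∧ N = S + K :=
  have hu : IsUnit (1 - C x * K) := isUnit_one_sub (by simp [hK0])
  mul_one_add_mul_eq_and_eq_add_of_mul_one_sub_eq hu.isRegular.right hN hS
end

section
/- Let X and Y be independent nonnegative-integer random variables such that, as n → ∞, P(X = n)/P(Y = n) → λ for some λ ∈ (0, ∞), P(Y = n+1)/P(Y = n) → 1, and P(X + Y = n)/(P(X = n) + P(Y = n)) → 1. Then, setting p = 1/(1 + λ), for every fixed k ≥ 0: P(X = k | X + Y = n) → p·P(X = k) and P(Y = k | X + Y = n) → (1 − p)·P(Y = k). -/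
open Filter Topology

/-!
Divide everything by `P(Y = n)`. Since consecutive ratios of `pY` tend to `1`, we get
`P(Y = n - k) / P(Y = n) → 1`, hence also `P(X = n - k) / P(Y = n) → λ`, while the hypothesis
on `P(X + Y = n)` gives `P(X + Y = n) / P(Y = n) → λ + 1`. The two conditional probabilities
are then `P(X = k)·1/(λ+1)` and `P(Y = k)·λ/(λ+1)` in the limit.
-/

section RatioLimits

variable {K : Type*} [NormedField K]

theorem tendsto_comp_add_div_self_of_tendsto_succ_div {f : ℕ → K} (hf : ∀ᶠ n in atTop, f n ≠ 0)
    (hshift : Tendsto (fun n => f (n + 1) / f n) atTop (𝓝 1)) (m : ℕ) :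
    Tendsto (fun n => f (n + m) / f n) atTop (𝓝 1) := by
  induction m with
  | zero => exact tendsto_const_nhds.congr' (hf.mono fun n hn => (div_self hn).symm)
  | succ m ih =>
    have hstep := (hshift.comp (tendsto_add_atTop_nat m)).mul ih
    rw [one_mul] at hstep
    refine hstep.congr' ?_
    filter_upwards [(tendsto_add_atTop_nat m).eventually hf] with n hn
    simp only [Function.comp_apply, ← add_assoc]
    exact div_mul_div_cancel₀ hn

theorem tendsto_comp_sub_div_self_of_tendsto_succ_div {f : ℕ → K} (hf : ∀ᶠ n in atTop, f n ≠ 0)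
    (hshift : Tendsto (fun n => f (n + 1) / f n) atTop (𝓝 1)) (m : ℕ) :
    Tendsto (fun n => f (n - m) / f n) atTop (𝓝 1) := by
  have hinv := ((tendsto_comp_add_div_self_of_tendsto_succ_div hf hshift m).inv₀
    one_ne_zero).comp (tendsto_sub_atTop_nat m)
  rw [inv_one] at hinv
  refine hinv.congr' ?_
  filter_upwards [eventually_ge_atTop m] with n hn
  simp only [Function.comp_apply, Nat.sub_add_cancel hn, inv_div]

theorem tendsto_div_of_tendsto_div_add {a b g : ℕ → K} {c lam : K}
    (hb : ∀ᶠ n in atTop, b n ≠ 0) (hab : Tendsto (fun n => a n / b n) atTop (𝓝 lam))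
    (hlam : lam + 1 ≠ 0) (hg : Tendsto (fun n => g n / (a n + b n)) atTop (𝓝 c)) :
    Tendsto (fun n => g n / b n) atTop (𝓝 (c * (lam + 1))) := by
  have hab1 : Tendsto (fun n => a n / b n + 1) atTop (𝓝 (lam + 1)) :=
    hab.add tendsto_const_nhds
  refine (hg.mul hab1).congr' ?_
  filter_upwards [hb, hab1.eventually_ne hlam] with n hbn habn
  have hsum : a n + b n ≠ 0 := by
    rwa [div_add_one hbn, div_ne_zero_iff, and_iff_left hbn] at habn
  rw [div_add_one hbn, div_mul_div_cancel₀ hsum]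

theorem tendsto_const_mul_div_of_tendsto_div {b u v : ℕ → K} {c d : K} (a : K)
    (hb : ∀ᶠ n in atTop, b n ≠ 0) (hu : Tendsto (fun n => u n / b n) atTop (𝓝 c))
    (hv : Tendsto (fun n => v n / b n) atTop (𝓝 d)) (hd : d ≠ 0) :
    Tendsto (fun n => a * u n / v n) atTop (𝓝 (a * (c / d))) := by
  refine (tendsto_const_nhds.mul (hu.div hv hd)).congr' ?_
  filter_upwards [hb] with n hn
  simp only [Pi.div_apply, div_div_div_cancel_right₀ hn, mul_div_assoc]

end RatioLimits

theorem two_sided_condensation_general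
    (pX pY : ℕ → ℝ)
    (pXY : ℕ → ℝ)
    (hYpos : ∀ᶠ n in atTop, 0 < pY n)
    (lam : ℝ) (hlam : 0 < lam)
    (hXYratio : Tendsto (fun n => pX n / pY n) atTop (nhds lam))
    (hYshift : Tendsto (fun n => pY (n + 1) / pY n) atTop (nhds 1))
    (hsumratio : Tendsto (fun n => pXY n / (pX n + pY n)) atTop (nhds 1))
    (p : ℝ) (hp : p = 1 / (1 + lam)) :
    ∀ k : ℕ,
      Tendsto (fun n => pX k * pY (n - k) / pXY n) atTop (nhds (p * pX k)) ∧
      Tendsto (fun n => pY k * pX (n - k) / pXY n) atTop (nhds ((1 - p) * pY k)) := by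
  subst hp
  intro k
  have hY : ∀ᶠ n in atTop, pY n ≠ 0 := hYpos.mono fun n hn => hn.ne'
  have hlam1 : lam + 1 ≠ 0 := by positivity
  have hYsub := tendsto_comp_sub_div_self_of_tendsto_succ_div hY hYshift k
  have hXsub : Tendsto (fun n => pX (n - k) / pY n) atTop (𝓝 lam) := by
    have h := (hXYratio.comp (tendsto_sub_atTop_nat k)).mul hYsub
    rw [mul_one] at h
    refine h.congr' ?_
    filter_upwards [(tendsto_sub_atTop_nat k).eventually hY] with n hn
    exact div_mul_div_cancel₀ hn
  have hXY := tendsto_div_of_tendsto_div_add hY hXYratio hlam1 hsumratio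
  rw [one_mul] at hXY
  constructor
  · convert tendsto_const_mul_div_of_tendsto_div (pX k) hY hYsub hXY hlam1 using 2
    ring
  · convert tendsto_const_mul_div_of_tendsto_div (pY k) hY hXsub hXY hlam1 using 2
    field_simp
    ring

/-- Two-sided condensation: if `P(X=n)/P(Y=n) → λ ∈ (0,∞)`, `P(Y=n+1)/P(Y=n) → 1`
and `P(X+Y=n)/(P(X=n)+P(Y=n)) → 1`, then with `p = 1/(1+λ)`, for every fixed `k`,
`P(X=k | X+Y=n) → p·P(X=k)` and `P(Y=k | X+Y=n) → (1−p)·P(Y=k)`. -/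
theorem two_sided_condensation
    (pX pY : ℕ → ℝ) (hX : ∀ k, 0 ≤ pX k) (hY : ∀ k, 0 ≤ pY k)
    (hXsum : HasSum pX 1) (hYsum : HasSum pY 1)
    (pXY : ℕ → ℝ) (hconv : ∀ n, pXY n = ∑ k ∈ Finset.range (n + 1), pX k * pY (n - k))
    (hXpos : ∀ᶠ n in atTop, 0 < pX n) (hYpos : ∀ᶠ n in atTop, 0 < pY n)
    (lam : ℝ) (hlam : 0 < lam)
    (hXYratio : Tendsto (fun n => pX n / pY n) atTop (nhds lam))
    (hYshift : Tendsto (fun n => pY (n + 1) / pY n) atTop (nhds 1))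
    (hsumratio : Tendsto (fun n => pXY n / (pX n + pY n)) atTop (nhds 1))
    (p : ℝ) (hp : p = 1 / (1 + lam)) :
    ∀ k : ℕ,
      Tendsto (fun n => pX k * pY (n - k) / pXY n) atTop (nhds (p * pX k)) ∧
      Tendsto (fun n => pY k * pX (n - k) / pXY n) atTop (nhds ((1 - p) * pY k)) :=
  two_sided_condensation_general pX pY pXY hYpos lam hlam hXYratio hYshift hsumratio p hp
end

section
/- Let (g_n)_{n≥0} be a nonnegative sequence with g_n > 0 for all large n such that g_n/g_{n+1} → ρ ∈ (0, ∞) and (1/g_n)·Σ_{i+j=n} g_i g_j → 2·G(ρ) < ∞, where G(z) = Σ g_n z^n. Then for every fixed m ≥ 1, (1/g_n)·Σ_{i_1+⋯+i_m=n} g_{i_1}⋯g_{i_m} → m·G(ρ)^{m−1} as n → ∞. -/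
open Filter Finset Topology

/-!
Write `a` for the `m`-fold convolution power of `g` and argue by induction on `m`, carrying along
`Σ aₙ ρⁿ = G(ρ)ᵐ` and `aₙ / gₙ → A := m G(ρ)ᵐ⁻¹`. In the step, split `Σ_{i+j=n} gᵢ aⱼ` into the
`K` first terms, the `K` last terms and the middle. Since `g_{n-i} / gₙ → ρⁱ`, the two ends
divided by `gₙ` tend to `A Σ_{i<K} gᵢ ρⁱ + Σ_{j<K} aⱼ ρʲ`. Since `a ≤ C g` eventually, the middle
is at most `C` times the middle of the square convolution `g * g`, and by the hypothesis on `g * g`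
that tends to `2 G(ρ) - 2 Σ_{i<K} gᵢ ρⁱ`, which is small for large `K`.
-/

lemma sum_range_succ_eq_head_add_middle_add_tail {M : Type*} [AddCommMonoid M] (f : ℕ → ℕ → M)
    {K n : ℕ} (h : 2 * K ≤ n + 1) :
    ∑ i ∈ range (n + 1), f i (n - i) =
      ∑ i ∈ range K, f i (n - i) + ∑ i ∈ Ico K (n + 1 - K), f i (n - i) +
        ∑ j ∈ range K, f (n - j) j := by
  have htail : ∑ i ∈ Ico (n + 1 - K) (n + 1), f i (n - i) = ∑ j ∈ range K, f (n - j) j := by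
    refine sum_nbij' (n - ·) (n - ·) ?_ ?_ ?_ ?_ ?_ <;> grind
  rw [range_eq_Ico, ← sum_Ico_consecutive _ (Nat.zero_le _) (by omega : n + 1 - K ≤ n + 1),
    ← sum_Ico_consecutive _ (Nat.zero_le K) (by omega : K ≤ n + 1 - K), htail, ← range_eq_Ico]

lemma HasSum.sum_range_mul_of_nonneg {x y : ℕ → ℝ} {X Y : ℝ} (hx0 : ∀ n, 0 ≤ x n)
    (hy0 : ∀ n, 0 ≤ y n) (hx : HasSum x X) (hy : HasSum y Y) :
    HasSum (fun n => ∑ k ∈ range (n + 1), x k * y (n - k)) (X * Y) := by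
  have hxn : Summable fun n => ‖x n‖ :=
    hx.summable.congr fun n => (Real.norm_of_nonneg (hx0 n)).symm
  have hyn : Summable fun n => ‖y n‖ :=
    hy.summable.congr fun n => (Real.norm_of_nonneg (hy0 n)).symm
  simpa only [hx.tsum_eq, hy.tsum_eq] using hasSum_sum_range_mul_of_summable_norm hxn hyn

lemma tendsto_of_approx {ι α : Type*} {k : Filter ι} [k.NeBot] {l : Filter α} {f : α → ℝ}
    {L : ℝ} {s e : ι → α → ℝ} {ℓ δ : ι → ℝ} (hs : ∀ K, Tendsto (s K) l (𝓝 (ℓ K)))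
    (he : ∀ K, Tendsto (e K) l (𝓝 (δ K))) (hℓ : Tendsto ℓ k (𝓝 L)) (hδ : Tendsto δ k (𝓝 0))
    (hf : ∀ᶠ K in k, ∀ᶠ x in l, |f x - s K x| ≤ e K x) : Tendsto f l (𝓝 L) := by
  rw [Metric.tendsto_nhds]
  intro ε hε
  obtain ⟨K, hfK, hℓK, hδK⟩ := (hf.and ((Metric.tendsto_nhds.mp hℓ (ε / 4) (by positivity)).and
    (hδ.eventually_lt_const (by positivity : (0 : ℝ) < ε / 4)))).exists
  filter_upwards [hfK, Metric.tendsto_nhds.mp (hs K) (ε / 4) (by positivity),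
    (he K).eventually_lt_const (by linarith : δ K < ε / 2)] with x hfx hsx hex
  rw [Real.dist_eq] at hℓK hsx ⊢
  calc |f x - L| ≤ |f x - s K x| + (|s K x - ℓ K| + |ℓ K - L|) := by
        grw [abs_sub_le (f x) (s K x), abs_sub_le (s K x) (ℓ K)]
    _ < ε := by linarith

noncomputable def convPow (g : ℕ → ℝ) (m n : ℕ) : ℝ :=
  ∑' f : Fin m → ℕ, if ∑ i, f i = n then ∏ i, g (f i) else 0

namespace convPow

variable (g : ℕ → ℝ)

lemma summable (m n : ℕ) :
    Summable fun f : Fin m → ℕ => if ∑ i, f i = n then ∏ i, g (f i) else 0 := by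
  refine summable_of_hasFiniteSupport ((Set.finite_Iic fun _ => n).subset fun f hf => ?_)
  intro i
  have hsum : ∑ i, f i = n := by by_contra h; exact hf (if_neg h)
  exact hsum ▸ single_le_sum (fun _ _ => Nat.zero_le _) (mem_univ i)

lemma zero (n : ℕ) : convPow g 0 n = if n = 0 then 1 else 0 := by
  simp [convPow, eq_comm]

lemma succ (m n : ℕ) :
    convPow g (m + 1) n = ∑ j ∈ range (n + 1), g j * convPow g m (n - j) := by
  have hsumm := (summable g (m + 1) n).comp_injective (Fin.consEquiv fun _ => ℕ).injective
  rw [convPow, ← (Fin.consEquiv fun _ => ℕ).tsum_eq]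
  simp only [Function.comp_def, Fin.consEquiv_apply, Fin.sum_cons, Fin.prod_univ_succ,
    Fin.cons_zero, Fin.cons_succ] at hsumm ⊢
  rw [hsumm.tsum_prod' hsumm.prod_factor, tsum_eq_sum (s := range (n + 1))]
  · refine sum_congr rfl fun j hj => ?_
    rw [convPow, ← tsum_mul_left]
    congr 1
    ext f
    have : j + ∑ i, f i = n ↔ ∑ i, f i = n - j := by rw [mem_range] at hj; omega
    simp only [this, mul_ite, mul_zero]
  · intro j hj
    rw [mem_range] at hj
    exact (tsum_congr fun f => if_neg (by omega)).trans tsum_zero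

variable {g} in
lemma nonneg (hg : ∀ n, 0 ≤ g n) (m n : ℕ) : 0 ≤ convPow g m n :=
  tsum_nonneg fun f => by split_ifs <;> first | positivity | exact prod_nonneg fun i _ => hg _

end convPow

section Subexponential

variable {g : ℕ → ℝ} {ρ : ℝ}

lemma tendsto_div_self_of_eventually_pos (hpos : ∀ᶠ n in atTop, 0 < g n) :
    Tendsto (fun n => g n / g n) atTop (𝓝 1) :=
  tendsto_const_nhds.congr' (hpos.mono fun _ hn => (div_self hn.ne').symm)

variable (hpos : ∀ᶠ n in atTop, 0 < g n) (hratio : Tendsto (fun n => g n / g (n + 1)) atTop (𝓝 ρ))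
include hpos hratio

lemma tendsto_sub_div_self (i : ℕ) : Tendsto (fun n => g (n - i) / g n) atTop (𝓝 (ρ ^ i)) := by
  induction i with
  | zero => simpa using tendsto_div_self_of_eventually_pos hpos
  | succ i ih =>
    have hstep : Tendsto (fun n => g (n - (i + 1)) / g (n - i)) atTop (𝓝 ρ) :=
      (hratio.comp (tendsto_sub_atTop_nat (i + 1))).congr' <|
        (eventually_ge_atTop (i + 1)).mono fun n hn => by
          rw [Function.comp_apply, show n - (i + 1) + 1 = n - i by omega]
    refine (pow_succ' ρ i ▸ hstep.mul ih).congr' ?_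
    filter_upwards [(tendsto_sub_atTop_nat i).eventually hpos] with n hn
    exact div_mul_div_cancel₀ hn.ne'

lemma tendsto_sub_div_of_tendsto_div {b : ℕ → ℝ} {B : ℝ}
    (hb : Tendsto (fun n => b n / g n) atTop (𝓝 B)) (i : ℕ) : Tendsto (fun n => b (n - i) / g n) atTop (𝓝 (B * ρ ^ i)) := by
  refine ((hb.comp (tendsto_sub_atTop_nat i)).mul (tendsto_sub_div_self hpos hratio i)).congr' ?_
  filter_upwards [(tendsto_sub_atTop_nat i).eventually hpos] with n hn
  exact div_mul_div_cancel₀ hn.ne'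

lemma tendsto_sum_mul_sub_div {b : ℕ → ℝ} {B : ℝ}
    (hb : Tendsto (fun n => b n / g n) atTop (𝓝 B)) (c : ℕ → ℝ) (K : ℕ) :
    Tendsto (fun n => (∑ i ∈ range K, c i * b (n - i)) / g n) atTop
      (𝓝 (B * ∑ i ∈ range K, c i * ρ ^ i)) := by
  have := tendsto_finsetSum (range K) fun i _ =>
    (tendsto_sub_div_of_tendsto_div hpos hratio hb i).const_mul (c i)
  convert this using 1
  · ext n; rw [sum_div]; simp only [mul_div_assoc]
  · rw [mul_sum]; exact congrArg 𝓝 (sum_congr rfl fun i _ => by ring)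

variable (hg : ∀ n, 0 ≤ g n) {Gρ : ℝ} (hG : HasSum (fun n => g n * ρ ^ n) Gρ)
  (hconv : Tendsto (fun n => (∑ i ∈ range (n + 1), g i * g (n - i)) / g n) atTop (𝓝 (2 * Gρ)))
include hg hG hconv

lemma tendsto_sum_mul_div_of_subexponential {a : ℕ → ℝ} {A Â : ℝ} (ha : ∀ n, 0 ≤ a n)
    (haSum : HasSum (fun n => a n * ρ ^ n) Â) (haLim : Tendsto (fun n => a n / g n) atTop (𝓝 A)) :
    Tendsto (fun n => (∑ i ∈ range (n + 1), g i * a (n - i)) / g n) atTop (𝓝 (Â + A * Gρ)) := by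
  set H : ℕ → ℝ := fun K => ∑ i ∈ range K, g i * ρ ^ i
  set middle : (ℕ → ℝ) → ℕ → ℕ → ℝ :=
    fun b K n => (∑ i ∈ Ico K (n + 1 - K), g i * b (n - i)) / g n
  have hsplit (b : ℕ → ℝ) (K : ℕ) : ∀ᶠ n in atTop,
      (∑ i ∈ range (n + 1), g i * b (n - i)) / g n = (∑ i ∈ range K, g i * b (n - i)) / g n +
        (∑ j ∈ range K, b j * g (n - j)) / g n + middle b K n := by
    filter_upwards [eventually_ge_atTop (2 * K)] with n hn
    rw [sum_range_succ_eq_head_add_middle_add_tail (K := K) (fun i j => g i * b j) (by omega),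
      sum_congr rfl fun j _ => mul_comm (g (n - j)) (b j)]
    ring
  have hone := tendsto_div_self_of_eventually_pos hpos
  have hhead := tendsto_sum_mul_sub_div hpos hratio haLim g
  have htail := tendsto_sum_mul_sub_div hpos hratio hone a
  have hH : Tendsto H atTop (𝓝 Gρ) := hG.tendsto_sum_nat
  have hmiddle (K : ℕ) : Tendsto (middle g K) atTop (𝓝 (2 * Gρ - H K - H K)) := by
    have hends := tendsto_sum_mul_sub_div hpos hratio hone g K
    have := (hconv.sub hends).sub hends
    simp only [one_mul] at this
    refine this.congr' ((hsplit g K).mono fun n hn => ?_)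
    rw [hn]; ring
  obtain ⟨N, hdom⟩ : ∃ N, ∀ n ≥ N, a n ≤ (A + 1) * g n := by
    obtain ⟨N, hN⟩ := eventually_atTop.mp ((haLim.eventually_lt_const (lt_add_one A)).and hpos)
    exact ⟨N, fun n hn => (div_le_iff₀ (hN n hn).2).mp (hN n hn).1.le⟩
  refine tendsto_of_approx (k := atTop) (fun K => (hhead K).add (htail K))
    (fun K => (hmiddle K).const_mul (A + 1))
    (δ := fun K => (A + 1) * (2 * Gρ - H K - H K)) ?_ ?_ ?_
  · simpa only [one_mul, add_comm Â] using (hH.const_mul A).add haSum.tendsto_sum_nat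
  · convert ((tendsto_const_nhds.sub hH).sub hH).const_mul (A + 1) using 2
    ring
  · filter_upwards [eventually_ge_atTop N] with K hK
    filter_upwards [hsplit a K, hpos] with n hn hgn
    have hmid_nonneg : 0 ≤ middle a K n :=
      div_nonneg (sum_nonneg fun i _ => mul_nonneg (hg i) (ha _)) hgn.le
    rw [hn, add_sub_cancel_left, abs_of_nonneg hmid_nonneg, ← mul_div_assoc, mul_sum]
    refine div_le_div_of_nonneg_right (sum_le_sum fun i hi => ?_) hgn.le
    have hle := hdom (n - i) (by rw [mem_Ico] at hi; omega)
    calc g i * a (n - i) ≤ g i * ((A + 1) * g (n - i)) := mul_le_mul_of_nonneg_left hle (hg i)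
      _ = (A + 1) * (g i * g (n - i)) := by ring

theorem convPow_hasSum_and_tendsto (hρ : 0 ≤ ρ) (m : ℕ) :
    HasSum (fun n => convPow g m n * ρ ^ n) (Gρ ^ m) ∧
      Tendsto (fun n => convPow g m n / g n) atTop (𝓝 (m * Gρ ^ (m - 1))) := by
  induction m with
  | zero =>
    constructor
    · rw [pow_zero]
      convert hasSum_ite_eq 0 (1 : ℝ) using 1
      ext n
      by_cases hn : n = 0 <;> simp [convPow.zero, hn]
    · refine tendsto_const_nhds.congr' ?_
      filter_upwards [eventually_ne_atTop 0] with n hn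
      simp [convPow.zero, hn]
  | succ m ih =>
    have hSum : HasSum (fun n => convPow g (m + 1) n * ρ ^ n) (Gρ * Gρ ^ m) := by
      refine (hG.sum_range_mul_of_nonneg (fun n => mul_nonneg (hg n) (pow_nonneg hρ n))
        (fun n => mul_nonneg (convPow.nonneg hg m n) (pow_nonneg hρ n)) ih.1).congr_fun ?_
      intro n
      rw [convPow.succ, sum_mul]
      refine sum_congr rfl fun i hi => ?_
      rw [← pow_mul_pow_sub ρ (Nat.lt_succ_iff.mp (mem_range.mp hi))]
      ring
    refine ⟨pow_succ' Gρ m ▸ hSum, ?_⟩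
    have hval : ((m + 1 : ℕ) : ℝ) * Gρ ^ (m + 1 - 1) = Gρ ^ m + m * Gρ ^ (m - 1) * Gρ := by
      rcases m with _ | m
      · simp
      · push_cast [Nat.add_sub_cancel, pow_succ]
        ring
    simpa only [convPow.succ, hval] using tendsto_sum_mul_div_of_subexponential hpos hratio hg hG
      hconv (convPow.nonneg hg m) ih.1 ih.2

end Subexponential

/-- Subexponentiality self-improves from the square convolution to all `m`-fold
convolutions: if `g_n/g_{n+1} → ρ` and `(Σ_{i+j=n} g_i g_j)/g_n → 2G(ρ) < ∞`,
then `(Σ_{i₁+⋯+i_m=n} g_{i₁}⋯g_{i_m})/g_n → m·G(ρ)^{m−1}`. -/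
theorem subexponential_convolution
    (g : ℕ → ℝ) (hg : ∀ n, 0 ≤ g n) (hpos : ∀ᶠ n in atTop, 0 < g n)
    (ρ Gρ : ℝ) (hρ : 0 < ρ)
    (hratio : Tendsto (fun n => g n / g (n + 1)) atTop (nhds ρ))
    (hG : HasSum (fun n => g n * ρ ^ n) Gρ)
    (hconv : Tendsto (fun n => (∑ i ∈ Finset.range (n + 1), g i * g (n - i)) / g n)
      atTop (nhds (2 * Gρ))) :
    ∀ m : ℕ, 1 ≤ m →
      Tendsto (fun n =>
          (∑' f : Fin m → ℕ, if (∑ i, f i) = n then ∏ i, g (f i) else 0) / g n)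
        atTop (nhds (m * Gρ ^ (m - 1))) :=
  fun m _ => (convPow_hasSum_and_tendsto hpos hratio hg hG hconv hρ.le m).2
end
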